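/- Let k be a field, B = B_{n,m} a bipath poset, and V a B-persistence module. Let I = {i_1, i_1+1, …, i_2} with 1 ≤ i_1 ≤ i_2 ≤ n be an interval contained in the upper-path points of B (so I contains neither 0̂ nor 1̂). Then the multiplicity of the interval module k_I in the interval decomposition of V equals the multiplicity of the interval module k_{[i_1,i_2]} in the interval decomposition of the restriction V|_U of V to the chain U: 0̂<1<⋯<n<1̂. -/

import Mathlib

open Classical

/-- A persistence module over a poset `P` with coefficients in a field `k`. -/
structure PersMod (k : Type) [Field k] (P : Type) [PartialOrder P] : Type 1 where
  V : P → Type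
  [instAddCommGroup : ∀ a, AddCommGroup (V a)]
  [instModule : ∀ a, Module k (V a)]
  [instFinDim : ∀ a, FiniteDimensional k (V a)]
  map : ∀ {a b : P}, a ≤ b → (V a →ₗ[k] V b)
  map_id : ∀ a : P, map (le_refl a) = LinearMap.id
  map_comp : ∀ {a b c : P} (hab : a ≤ b) (hbc : b ≤ c),
      map (le_trans hab hbc) = (map hbc).comp (map hab)

attribute [instance] PersMod.instAddCommGroup PersMod.instModule PersMod.instFinDim

variable {k : Type} [Field k] {P : Type} [PartialOrder P]

/-- The submodule of natural transformations inside the product of all hom spaces. -/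
def PersMod.homSubmodule (M N : PersMod k P) :
    Submodule k (∀ a : P, M.V a →ₗ[k] N.V a) where
  carrier := {F | ∀ (a b : P) (h : a ≤ b), (F b).comp (M.map h) = (N.map h).comp (F a)}
  add_mem' := by
    intro f g hf hg a b h
    simp only [Pi.add_apply, LinearMap.add_comp, LinearMap.comp_add, hf a b h, hg a b h]
  zero_mem' := by
    intro a b h
    simp
  smul_mem' := by
    intro c f hf a b h
    simp only [Pi.smul_apply, LinearMap.smul_comp, LinearMap.comp_smul, hf a b h]

/-- Morphisms of persistence modules. -/
abbrev PersHom (M N : PersMod k P) := ↥(PersMod.homSubmodule M N)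

/-- Isomorphism of persistence modules. -/
def PersMod.Iso (M N : PersMod k P) : Prop :=
  ∃ f : PersHom M N, ∀ a : P, Function.Bijective (f.1 a)

/-- Identity morphism. -/
def persId (M : PersMod k P) : PersHom M M :=
  ⟨fun _ => LinearMap.id, fun a b h => by simp⟩

/-- Composition of morphisms of persistence modules. -/
def persComp {M N O : PersMod k P} (f : PersHom M N) (g : PersHom N O) : PersHom M O :=
  ⟨fun a => (g.1 a).comp (f.1 a), fun a b h => by
    rw [LinearMap.comp_assoc, f.2 a b h, ← LinearMap.comp_assoc, g.2 a b h,
      LinearMap.comp_assoc]⟩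

/-- Finite direct sums of persistence modules. -/
def PersMod.dsum {ι : Type} [Finite ι] (M : ι → PersMod k P) : PersMod k P where
  V a := ∀ i, (M i).V a
  map h := LinearMap.pi fun i => ((M i).map h).comp (LinearMap.proj i)
  map_id a := by
    ext x i
    simp [PersMod.map_id]
  map_comp hab hbc := by
    apply LinearMap.ext
    intro x
    funext i
    simp only [LinearMap.pi_apply, LinearMap.coe_comp, Function.comp_apply,
      LinearMap.proj_apply]
    rw [(M i).map_comp hab hbc]
    simp

/-- Binary direct sum of persistence modules. -/
def PersMod.prod (M N : PersMod k P) : PersMod k P where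
  V a := M.V a × N.V a
  map h := (M.map h).prodMap (N.map h)
  map_id a := by
    ext x <;> simp [PersMod.map_id]
  map_comp hab hbc := by
    apply LinearMap.ext
    intro x
    try dsimp only
    rw [M.map_comp hab hbc, N.map_comp hab hbc]
    simp

/-- Restriction of a persistence module along a monotone map. -/
def PersMod.comap {Q : Type} [PartialOrder Q] (f : Q →o P) (V : PersMod k P) :
    PersMod k Q where
  V a := V.V (f a)
  map h := V.map (f.monotone h)
  map_id a := V.map_id (f a)
  map_comp hab hbc := V.map_comp (f.monotone hab) (f.monotone hbc)

/-- The sub-persistence module determined by a family of submodules preserved by the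
structure maps. -/
def PersMod.sub (W : PersMod k P) (S : ∀ a : P, Submodule k (W.V a))
    (hS : ∀ {a b : P} (h : a ≤ b), ∀ x ∈ S a, W.map h x ∈ S b) : PersMod k P where
  V a := ↥(S a)
  map h := (W.map h).restrict (hS h)
  map_id a := by
    apply LinearMap.ext
    intro x
    apply Subtype.ext
    simp [LinearMap.restrict_apply, W.map_id]
  map_comp hab hbc := by
    apply LinearMap.ext
    intro x
    apply Subtype.ext
    simp only [LinearMap.restrict_apply, LinearMap.coe_comp, Function.comp_apply]
    rw [W.map_comp hab hbc]
    simp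

/-- Convexity of a subset of a poset. -/
def IsConvex (I : Set P) : Prop :=
  ∀ ⦃a b z : P⦄, a ∈ I → b ∈ I → a ≤ z → z ≤ b → z ∈ I

/-- Connectivity of a subset of a poset: any two points are joined by a finite sequence of
consecutively comparable points inside the subset. -/
def IsConnectedSet (I : Set P) : Prop :=
  ∀ ⦃a⦄, a ∈ I → ∀ ⦃b⦄, b ∈ I →
    Relation.ReflTransGen (fun x y => x ∈ I ∧ y ∈ I ∧ (x ≤ y ∨ y ≤ x)) a b

/-- An interval of a poset: a nonempty convex connected subset. -/
def IsInterval (I : Set P) : Prop :=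
  I.Nonempty ∧ IsConvex I ∧ IsConnectedSet I

/-- The interval module `k_I` attached to a convex subset `I`. -/
noncomputable def intervalModule (k : Type) [Field k] {P : Type} [PartialOrder P] (I : Set P)
    (hI : IsConvex I) : PersMod k P where
  V a := PLift (a ∈ I) → k
  map {a b} _ :=
    { toFun := fun f _ => if ha : a ∈ I then f ⟨ha⟩ else 0
      map_add' := fun f g => by
        funext hb
        by_cases ha : a ∈ I <;> simp [ha]
      map_smul' := fun c f => by
        funext hb
        by_cases ha : a ∈ I <;> simp [ha] }
  map_id a := by
    apply LinearMap.ext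
    intro f
    funext hb
    simp only [LinearMap.coe_mk, AddHom.coe_mk, LinearMap.id_coe, id_eq]
    rw [dif_pos hb.down]
  map_comp {a b c} hab hbc := by
    apply LinearMap.ext
    intro f
    funext hc
    by_cases ha : a ∈ I
    · have hb : b ∈ I := hI ha hc.down hab hbc
      simp only [LinearMap.coe_comp, Function.comp_apply, LinearMap.coe_mk, AddHom.coe_mk,
        dif_pos ha, dif_pos hb]
    · simp only [LinearMap.coe_comp, Function.comp_apply, LinearMap.coe_mk, AddHom.coe_mk,
        dif_neg ha]
      by_cases hb : b ∈ I <;> simp [hb, dif_neg ha]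
/-- The underlying type of the bipath poset `B_{n,m}`:
a global minimum `bot = 0̂`, an upper path `1, …, n`, a lower path `1', …, m'`,
and a global maximum `top = 1̂`. -/
inductive Bipath (n m : ℕ) : Type where
  | bot : Bipath n m
  | up : Fin n → Bipath n m
  | down : Fin m → Bipath n m
  | top : Bipath n m
deriving DecidableEq

namespace Bipath

variable {n m : ℕ}

/-- Auxiliary embedding of the bipath poset into `ℕ × ℕ` (with the product order),
used to define its partial order, which is generated by
`0̂ < 1 < ⋯ < n < 1̂` and `0̂ < 1' < ⋯ < m' < 1̂`. -/
def toPair : Bipath n m → ℕ × ℕ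
  | .bot => (0, 0)
  | .up i => (i.1 + 1, 0)
  | .down j => (0, j.1 + 1)
  | .top => (n + 1, m + 1)

theorem toPair_injective : Function.Injective (toPair (n := n) (m := m)) := by
  intro x y h
  cases x <;> cases y <;>
    simp only [toPair, Prod.mk.injEq] at h <;>
    first
      | rfl
      | (exact absurd h (by omega))
      | (obtain ⟨h1, h2⟩ := h; congr 1; exact Fin.ext (by omega))

instance : PartialOrder (Bipath n m) := PartialOrder.lift toPair toPair_injective

theorem le_iff_toPair {x y : Bipath n m} : x ≤ y ↔ toPair x ≤ toPair y := Iff.rfl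

theorem bot_le' (x : Bipath n m) : (Bipath.bot : Bipath n m) ≤ x := by
  rw [le_iff_toPair, Prod.le_def]
  exact ⟨Nat.zero_le _, Nat.zero_le _⟩

theorem le_top' (x : Bipath n m) : x ≤ (Bipath.top : Bipath n m) := by
  rw [le_iff_toPair, Prod.le_def]
  cases x with
  | bot => exact ⟨Nat.zero_le _, Nat.zero_le _⟩
  | up i => have := i.isLt; exact ⟨by simp only [toPair]; omega, by simp only [toPair]; omega⟩
  | down j => have := j.isLt; exact ⟨by simp only [toPair]; omega, by simp only [toPair]; omega⟩
  | top => exact ⟨le_refl _, le_refl _⟩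

theorem up_le_up {i j : Fin n} : (Bipath.up i : Bipath n m) ≤ .up j ↔ i ≤ j := by
  rw [le_iff_toPair, Prod.le_def]
  simp only [toPair, Fin.le_def]
  omega

theorem down_le_down {i j : Fin m} : (Bipath.down i : Bipath n m) ≤ .down j ↔ i ≤ j := by
  rw [le_iff_toPair, Prod.le_def]
  simp only [toPair, Fin.le_def]
  omega

theorem not_up_le_down {i : Fin n} {j : Fin m} : ¬ (Bipath.up i : Bipath n m) ≤ .down j := by
  rw [le_iff_toPair, Prod.le_def]
  simp only [toPair]
  omega

theorem not_down_le_up {j : Fin m} {i : Fin n} : ¬ (Bipath.down j : Bipath n m) ≤ .up i := by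
  rw [le_iff_toPair, Prod.le_def]
  simp only [toPair]
  omega

theorem not_up_le_bot {i : Fin n} : ¬ (Bipath.up i : Bipath n m) ≤ .bot := by
  rw [le_iff_toPair, Prod.le_def]
  simp only [toPair]
  omega

theorem not_down_le_bot {j : Fin m} : ¬ (Bipath.down j : Bipath n m) ≤ .bot := by
  rw [le_iff_toPair, Prod.le_def]
  simp only [toPair]
  omega

theorem not_top_le_bot : ¬ (Bipath.top : Bipath n m) ≤ .bot := by
  rw [le_iff_toPair, Prod.le_def]
  simp only [toPair]
  omega

theorem not_top_le_up {i : Fin n} : ¬ (Bipath.top : Bipath n m) ≤ .up i := by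
  rw [le_iff_toPair, Prod.le_def]
  simp only [toPair]
  omega

theorem not_top_le_down {j : Fin m} : ¬ (Bipath.top : Bipath n m) ≤ .down j := by
  rw [le_iff_toPair, Prod.le_def]
  simp only [toPair]
  omega

instance : Finite (Bipath n m) := by
  apply Finite.of_surjective
    (fun x : (Unit ⊕ Fin n) ⊕ (Fin m ⊕ Unit) =>
      match x with
      | .inl (.inl _) => (Bipath.bot : Bipath n m)
      | .inl (.inr i) => .up i
      | .inr (.inl j) => .down j
      | .inr (.inr _) => .top)
  intro b
  cases b with
  | bot => exact ⟨.inl (.inl ()), rfl⟩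
  | up i => exact ⟨.inl (.inr i), rfl⟩
  | down j => exact ⟨.inr (.inl j), rfl⟩
  | top => exact ⟨.inr (.inr ()), rfl⟩

end Bipath

/-- Membership in the upper path `U : 0̂ < 1 < ⋯ < n < 1̂` of the bipath poset. -/
def Bipath.isUpper {n m : ℕ} : Bipath n m → Prop
  | .down _ => False
  | _ => True

/-- Membership in the lower path `D : 0̂ < 1' < ⋯ < m' < 1̂` of the bipath poset. -/
def Bipath.isLower {n m : ℕ} : Bipath n m → Prop
  | .up _ => False
  | _ => True

/-- The upper path `U : 0̂ < 1 < ⋯ < n < 1̂` of the bipath poset, as a poset. -/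
abbrev UposetB (n m : ℕ) := {x : Bipath n m // x.isUpper}

/-- The lower path `D : 0̂ < 1' < ⋯ < m' < 1̂` of the bipath poset, as a poset. -/
abbrev DposetB (n m : ℕ) := {x : Bipath n m // x.isLower}

/-- The inclusion of the upper path into the bipath poset. -/
def inclU (n m : ℕ) : UposetB n m →o Bipath n m := ⟨Subtype.val, fun _ _ h => h⟩

/-- The inclusion of the lower path into the bipath poset. -/
def inclD (n m : ℕ) : DposetB n m →o Bipath n m := ⟨Subtype.val, fun _ _ h => h⟩

section RankLemmas
open Module

variable {k : Type} [Field k] {P : Type} [PartialOrder P]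

theorem rank_eq_of_iso {M N : PersMod k P} (h : PersMod.Iso M N) {a b : P} (hab : a ≤ b) :
    finrank k (LinearMap.range (M.map hab)) = finrank k (LinearMap.range (N.map hab)) := by
  obtain ⟨f, hf⟩ := h
  have hc := f.2 a b hab
  have h1 : LinearMap.range ((f.1 b).comp (M.map hab))
      = Submodule.map (f.1 b) (LinearMap.range (M.map hab)) := LinearMap.range_comp _ _
  have h2 : LinearMap.range ((N.map hab).comp (f.1 a)) = LinearMap.range (N.map hab) :=
    LinearMap.range_comp_of_range_eq_top _ (LinearMap.range_eq_top.2 (hf a).2)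
  rw [hc, h2] at h1
  rw [h1]
  exact (Submodule.equivMapOfInjective _ (hf b).1 _).finrank_eq

/-- The submodule `Submodule.pi` is linearly equivalent to the pi type of the submodules. -/
def piSubEquiv {ι : Type} {φ : ι → Type} [∀ i, AddCommGroup (φ i)] [∀ i, Module k (φ i)]
    (p : ∀ i, Submodule k (φ i)) :
    (Submodule.pi Set.univ p) ≃ₗ[k] ∀ i, p i where
  toFun x i := ⟨x.1 i, x.2 i trivial⟩
  map_add' x y := rfl
  map_smul' c x := rfl
  invFun y := ⟨fun i => y i, fun i _ => (y i).2⟩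
  left_inv x := rfl
  right_inv y := rfl

theorem range_dsum_map {ι : Type} [Fintype ι] (M : ι → PersMod k P) {a b : P} (hab : a ≤ b) :
    LinearMap.range ((PersMod.dsum M).map hab)
      = Submodule.pi Set.univ (fun i => LinearMap.range ((M i).map hab)) := by
  ext x
  constructor
  · rintro ⟨v, rfl⟩ i _
    exact ⟨v i, rfl⟩
  · intro hx
    choose v hv using fun i => hx i trivial
    exact ⟨v, funext hv⟩

theorem finrank_range_dsum {ι : Type} [Fintype ι] (M : ι → PersMod k P) {a b : P}
    (hab : a ≤ b) :
    finrank k (LinearMap.range ((PersMod.dsum M).map hab))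
      = ∑ i, finrank k (LinearMap.range ((M i).map hab)) := by
  rw [range_dsum_map]
  exact (piSubEquiv _).finrank_eq.trans (Module.finrank_pi_fintype k)

theorem finrank_range_interval (I : Set P) (hI : IsConvex I) {a b : P} (hab : a ≤ b) :
    finrank k (LinearMap.range ((intervalModule k I hI).map hab))
      = if a ∈ I ∧ b ∈ I then 1 else 0 := by
  by_cases ha : a ∈ I
  · by_cases hb : b ∈ I
    · rw [if_pos ⟨ha, hb⟩]
      have hsurj : Function.Surjective ((intervalModule k I hI).map hab) := by
        intro g
        refine ⟨fun _ => g ⟨hb⟩, ?_⟩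
        show (fun _ => if ha' : a ∈ I then g ⟨hb⟩ else 0) = g
        funext h'
        rw [dif_pos ha]
      rw [LinearMap.range_eq_top.2 hsurj]
      haveI : Unique (PLift (b ∈ I)) := ⟨⟨⟨hb⟩⟩, fun _ => rfl⟩
      rw [finrank_top]
      show finrank k (PLift (b ∈ I) → k) = 1
      simp [Module.finrank_pi]
    · rw [if_neg (by tauto)]
      haveI : IsEmpty (PLift (b ∈ I)) := ⟨fun h => hb h.down⟩
      have h0 : finrank k ((intervalModule k I hI).V b) = 0 := by
        have : Subsingleton ((intervalModule k I hI).V b) := by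
          constructor; intro f g; funext h'; exact (IsEmpty.false h').elim
        exact finrank_zero_of_subsingleton
      have hle := Submodule.finrank_le (LinearMap.range ((intervalModule k I hI).map hab))
      omega
  · rw [if_neg (by tauto)]
    have hzero : (intervalModule k I hI).map hab = 0 := by
        apply LinearMap.ext
        intro f
        funext h'
        show (if ha' : a ∈ I then f ⟨ha'⟩ else 0) = 0
        rw [dif_neg ha]
    rw [hzero, LinearMap.range_zero, finrank_bot]

end RankLemmas
section CountLemmas
open Module

variable {k : Type} [Field k] {P : Type} [PartialOrder P]

theorem finrank_range_dsum_interval {ι : Type} [Fintype ι] (J : ι → Set P)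
    (hJ : ∀ i, IsConvex (J i)) {a b : P} (hab : a ≤ b) :
    finrank k (LinearMap.range ((PersMod.dsum fun i => intervalModule k (J i) (hJ i)).map hab))
      = Nat.card {i : ι // a ∈ J i ∧ b ∈ J i} := by
  classical
  rw [finrank_range_dsum]
  simp_rw [finrank_range_interval]
  rw [Nat.card_eq_fintype_card, Fintype.card_subtype, Finset.card_filter]

theorem count_identity {ι : Type} [Fintype ι] (S : ι → Set P) (hS : ∀ i, IsConvex (S i))
    {pa a b pb : P} (h1 : pa ≤ a) (h2 : a ≤ b) (h3 : b ≤ pb) :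
    Nat.card {i // a ∈ S i ∧ b ∈ S i ∧ pa ∉ S i ∧ pb ∉ S i}
      + (Nat.card {i // pa ∈ S i ∧ b ∈ S i} + Nat.card {i // a ∈ S i ∧ pb ∈ S i})
      = Nat.card {i // a ∈ S i ∧ b ∈ S i} + Nat.card {i // pa ∈ S i ∧ pb ∈ S i} := by
  classical
  simp_rw [Nat.card_eq_fintype_card, Fintype.card_subtype, Finset.card_filter]
  rw [← Finset.sum_add_distrib, ← Finset.sum_add_distrib, ← Finset.sum_add_distrib]
  refine Finset.sum_congr rfl fun i _ => ?_
  have c1 : pa ∈ S i → b ∈ S i → a ∈ S i := fun hp hb => hS i hp hb h1 h2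
  have c2 : a ∈ S i → pb ∈ S i → b ∈ S i := fun ha hp => hS i ha hp h2 h3
  have c3 : pa ∈ S i → pb ∈ S i → a ∈ S i := fun hp hq => hS i hp hq h1 (h2.trans h3)
  have c4 : pa ∈ S i → pb ∈ S i → b ∈ S i := fun hp hq => hS i hp hq (h1.trans h2) h3
  by_cases ha : a ∈ S i <;> by_cases hb : b ∈ S i <;>
    by_cases hpa : pa ∈ S i <;> by_cases hpb : pb ∈ S i <;> simp_all

end CountLemmas
section CharLemmas

variable {n m : ℕ}

/-- Predecessor of `up i1` in the upper path. -/
def paB (n m : ℕ) (i1 : Fin n) : Bipath n m :=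
  if _ : i1.1 = 0 then .bot else .up ⟨i1.1 - 1, by omega⟩

/-- Successor of `up i2` in the upper path. -/
def pbB (n m : ℕ) (i2 : Fin n) : Bipath n m :=
  if _ : i2.1 + 1 = n then .top else .up ⟨i2.1 + 1, by have := i2.isLt; omega⟩

theorem paB_le (i1 : Fin n) : (paB n m i1) ≤ .up i1 := by
  unfold paB; split
  · exact Bipath.bot_le' _
  · exact Bipath.up_le_up.2 (by simp only [Fin.le_def]; omega)

theorem le_pbB (i2 : Fin n) : (Bipath.up i2 : Bipath n m) ≤ pbB n m i2 := by
  unfold pbB; split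
  · exact Bipath.le_top' _
  · exact Bipath.up_le_up.2 (by simp only [Fin.le_def]; omega)

theorem paB_isUpper (i1 : Fin n) : (paB n m i1).isUpper := by
  unfold paB; split <;> trivial

theorem pbB_isUpper (i2 : Fin n) : (pbB n m i2).isUpper := by
  unfold pbB; split <;> trivial

/-- Characterization of the interval `up [i1, i2]` in the bipath poset. -/
theorem charB (i1 i2 : Fin n) (h12 : i1 ≤ i2) (J : Set (Bipath n m)) (hJ : IsInterval J) :
    (Bipath.up i1 ∈ J ∧ Bipath.up i2 ∈ J ∧ paB n m i1 ∉ J ∧ pbB n m i2 ∉ J)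
      ↔ J = {x : Bipath n m | ∃ j : Fin n, x = Bipath.up j ∧ i1 ≤ j ∧ j ≤ i2} := by
  obtain ⟨-, hconv, hconn⟩ := hJ
  constructor
  · rintro ⟨h1, h2, h3, h4⟩
    have hbot : (Bipath.bot : Bipath n m) ∉ J := by
      intro hbotJ
      by_cases h0 : i1.1 = 0
      · exact h3 (by rwa [paB, dif_pos h0])
      · refine h3 ?_
        rw [paB, dif_neg h0]
        exact hconv hbotJ h1 (Bipath.bot_le' _) (Bipath.up_le_up.2 (by simp only [Fin.le_def]; omega))
    have htop : (Bipath.top : Bipath n m) ∉ J := by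
      intro htopJ
      by_cases h0 : i2.1 + 1 = n
      · exact h4 (by rwa [pbB, dif_pos h0])
      · refine h4 ?_
        rw [pbB, dif_neg h0]
        exact hconv h2 htopJ (Bipath.up_le_up.2 (by simp only [Fin.le_def]; omega)) (Bipath.le_top' _)
    have hup : ∀ x ∈ J, ∃ j : Fin n, x = Bipath.up j := by
      intro x hx
      have hpath := hconn h1 hx
      clear hx
      induction hpath with
      | refl => exact ⟨i1, rfl⟩
      | @tail b c _ hR ih =>
        obtain ⟨j, rfl⟩ := ih
        obtain ⟨-, hcJ, hcomp⟩ := hR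
        cases c with
        | bot => exact absurd hcJ hbot
        | top => exact absurd hcJ htop
        | down j' =>
          rcases hcomp with h | h
          · exact absurd h Bipath.not_up_le_down
          · exact absurd h Bipath.not_down_le_up
        | up j' => exact ⟨j', rfl⟩
    ext x
    simp only [Set.mem_setOf_eq]
    constructor
    · intro hx
      obtain ⟨j, rfl⟩ := hup x hx
      refine ⟨j, rfl, ?_, ?_⟩
      · by_contra hlt
        push_neg at hlt
        have hlt' : j.1 < i1.1 := hlt
        have h0 : i1.1 ≠ 0 := by omega
        refine h3 ?_
        rw [paB, dif_neg h0]
        exact hconv hx h1 (Bipath.up_le_up.2 (by simp only [Fin.le_def, Fin.lt_def] at hlt ⊢; omega))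
          (Bipath.up_le_up.2 (by simp only [Fin.le_def]; omega))
      · by_contra hlt
        push_neg at hlt
        have hlt' : i2.1 < j.1 := hlt
        have h0 : i2.1 + 1 ≠ n := by have := j.isLt; omega
        refine h4 ?_
        rw [pbB, dif_neg h0]
        exact hconv h2 hx (Bipath.up_le_up.2 (by simp only [Fin.le_def]; omega))
          (Bipath.up_le_up.2 (by simp only [Fin.le_def, Fin.lt_def] at hlt ⊢; omega))
    · rintro ⟨j, rfl, hj1, hj2⟩
      exact hconv h1 h2 (Bipath.up_le_up.2 hj1) (Bipath.up_le_up.2 hj2)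
  · rintro rfl
    refine ⟨⟨i1, rfl, le_refl _, h12⟩, ⟨i2, rfl, h12, le_refl _⟩, ?_, ?_⟩
    · rw [paB]; split
      · rintro ⟨j, hj, -⟩; exact absurd hj (by simp)
      · rename_i h0
        rintro ⟨j, hj, hj1, -⟩
        simp only [Bipath.up.injEq] at hj
        subst hj
        have hj1' : i1.1 ≤ i1.1 - 1 := hj1
        omega
    · rw [pbB]; split
      · rintro ⟨j, hj, -⟩; exact absurd hj (by simp)
      · rintro ⟨j, hj, -, hj2⟩
        simp only [Bipath.up.injEq] at hj
        subst hj
        have hj2' : i2.1 + 1 ≤ i2.1 := hj2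
        omega

end CharLemmas
section CharU

variable {n m : ℕ}

theorem up_isUpper (j : Fin n) : (Bipath.up j : Bipath n m).isUpper := trivial
theorem bot_isUpper : (Bipath.bot : Bipath n m).isUpper := trivial
theorem top_isUpper : (Bipath.top : Bipath n m).isUpper := trivial

/-- Characterization of the interval `up [i1, i2]` in the upper path. -/
theorem charU (i1 i2 : Fin n) (h12 : i1 ≤ i2) (J : Set (UposetB n m)) (hJ : IsInterval J) :
    ((⟨.up i1, up_isUpper i1⟩ : UposetB n m) ∈ J ∧ (⟨.up i2, up_isUpper i2⟩ : UposetB n m) ∈ J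
        ∧ (⟨paB n m i1, paB_isUpper i1⟩ : UposetB n m) ∉ J
        ∧ (⟨pbB n m i2, pbB_isUpper i2⟩ : UposetB n m) ∉ J)
      ↔ J = {x : UposetB n m | ∃ j : Fin n, x.val = Bipath.up j ∧ i1 ≤ j ∧ j ≤ i2} := by
  obtain ⟨-, hconv, -⟩ := hJ
  constructor
  · rintro ⟨h1, h2, h3, h4⟩
    ext x
    simp only [Set.mem_setOf_eq]
    constructor
    · intro hx
      obtain ⟨v, hv⟩ := x
      cases v with
      | down j' => exact hv.elim
      | bot =>
        exfalso
        by_cases h0 : i1.1 = 0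
        · have he : (⟨paB n m i1, paB_isUpper i1⟩ : UposetB n m) = ⟨.bot, hv⟩ :=
            Subtype.ext (by unfold paB; exact dif_pos h0)
          rw [he] at h3
          exact h3 hx
        · refine h3 (hconv hx h1 ?_ ?_)
          · show paB n m i1 ≥ (Bipath.bot : Bipath n m)
            exact Bipath.bot_le' _
          · exact paB_le i1
      | top =>
        exfalso
        by_cases h0 : i2.1 + 1 = n
        · have he : (⟨pbB n m i2, pbB_isUpper i2⟩ : UposetB n m) = ⟨.top, hv⟩ :=
            Subtype.ext (by unfold pbB; exact dif_pos h0)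
          rw [he] at h4
          exact h4 hx
        · refine h4 (hconv h2 hx (le_pbB i2) ?_)
          show pbB n m i2 ≤ (Bipath.top : Bipath n m)
          exact Bipath.le_top' _
      | up j =>
        refine ⟨j, rfl, ?_, ?_⟩
        · by_contra hlt
          push_neg at hlt
          have hlt' : j.1 < i1.1 := hlt
          have h0 : i1.1 ≠ 0 := by omega
          refine h3 (hconv hx h1 ?_ (paB_le i1))
          show (Bipath.up j : Bipath n m) ≤ paB n m i1
          rw [paB, dif_neg h0]
          exact Bipath.up_le_up.2 (by simp only [Fin.le_def]; omega)
        · by_contra hlt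
          push_neg at hlt
          have hlt' : i2.1 < j.1 := hlt
          have h0 : i2.1 + 1 ≠ n := by have := j.isLt; omega
          refine h4 (hconv h2 hx (le_pbB i2) ?_)
          show pbB n m i2 ≤ (Bipath.up j : Bipath n m)
          rw [pbB, dif_neg h0]
          exact Bipath.up_le_up.2 (by simp only [Fin.le_def]; omega)
    · rintro ⟨j, hj, hj1, hj2⟩
      refine hconv h1 h2 ?_ ?_
      · show (Bipath.up i1 : Bipath n m) ≤ x.val
        rw [hj]
        exact Bipath.up_le_up.2 hj1
      · show x.val ≤ (Bipath.up i2 : Bipath n m)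
        rw [hj]
        exact Bipath.up_le_up.2 hj2
  · rintro rfl
    refine ⟨⟨i1, rfl, le_refl _, h12⟩, ⟨i2, rfl, h12, le_refl _⟩, ?_, ?_⟩
    · rw [Set.mem_setOf_eq]
      rw [show (⟨paB n m i1, paB_isUpper i1⟩ : UposetB n m).val = paB n m i1 from rfl, paB]
      split
      · rintro ⟨j, hj, -⟩; exact absurd hj (by simp)
      · rename_i h0
        rintro ⟨j, hj, hj1, -⟩
        simp only [Bipath.up.injEq] at hj
        subst hj
        have hj1' : i1.1 ≤ i1.1 - 1 := hj1
        omega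
    · rw [Set.mem_setOf_eq]
      rw [show (⟨pbB n m i2, pbB_isUpper i2⟩ : UposetB n m).val = pbB n m i2 from rfl, pbB]
      split
      · rintro ⟨j, hj, -⟩; exact absurd hj (by simp)
      · rintro ⟨j, hj, -, hj2⟩
        simp only [Bipath.up.injEq] at hj
        subst hj
        have hj2' : i2.1 + 1 ≤ i2.1 := hj2
        omega

end CharU
/-- Let `V` be a bipath persistence module and
`I = {i₁, …, i₂} ⊆ {1, …, n}` an interval contained in the upper-path points. The
multiplicity of `k_I` in any interval decomposition of `V` equals the multiplicity of
`k_{[i₁,i₂]}` in any interval decomposition of the restriction `V|_U` of `V` to the upper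
path `U : 0̂ < 1 < ⋯ < n < 1̂`. -/
theorem statement17 (k : Type) [Field k] {n m : ℕ} (V : PersMod k (Bipath n m))
    (i1 i2 : Fin n) (h12 : i1 ≤ i2)
    (ι : Type) [Finite ι] (J : ι → Set (Bipath n m)) (hJ : ∀ i, IsInterval (J i))
    (hiso : PersMod.Iso V (PersMod.dsum fun i => intervalModule k (J i) (hJ i).2.1))
    (ι' : Type) [Finite ι'] (J' : ι' → Set (UposetB n m)) (hJ' : ∀ i, IsInterval (J' i))
    (hiso' : PersMod.Iso (V.comap (inclU n m))
      (PersMod.dsum fun i => intervalModule k (J' i) (hJ' i).2.1)) :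
    Nat.card {i : ι // J i = {x : Bipath n m | ∃ j : Fin n, x = Bipath.up j ∧ i1 ≤ j ∧ j ≤ i2}}
      = Nat.card {i : ι' //
          J' i = {x : UposetB n m | ∃ j : Fin n, x.val = Bipath.up j ∧ i1 ≤ j ∧ j ≤ i2}} := by
  classical
  haveI := Fintype.ofFinite ι
  haveI := Fintype.ofFinite ι'
  -- the four points in the bipath poset
  set a : Bipath n m := .up i1 with ha_def
  set b : Bipath n m := .up i2 with hb_def
  set pa : Bipath n m := paB n m i1 with hpa_def
  set pb : Bipath n m := pbB n m i2 with hpb_def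
  have hab : a ≤ b := Bipath.up_le_up.2 h12
  have hpaa : pa ≤ a := paB_le i1
  have hbpb : b ≤ pb := le_pbB i2
  have hpab : pa ≤ b := hpaa.trans hab
  have hapb : a ≤ pb := hab.trans hbpb
  have hpapb : pa ≤ pb := hpaa.trans hapb
  -- the four points in the upper path
  set a' : UposetB n m := ⟨a, up_isUpper i1⟩ with ha'_def
  set b' : UposetB n m := ⟨b, up_isUpper i2⟩ with hb'_def
  set pa' : UposetB n m := ⟨pa, paB_isUpper i1⟩ with hpa'_def
  set pb' : UposetB n m := ⟨pb, pbB_isUpper i2⟩ with hpb'_def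
  have hab' : a' ≤ b' := hab
  have hpaa' : pa' ≤ a' := hpaa
  have hbpb' : b' ≤ pb' := hbpb
  have hpab' : pa' ≤ b' := hpab
  have hapb' : a' ≤ pb' := hapb
  have hpapb' : pa' ≤ pb' := hpapb
  -- ranks of V computed via the bipath decomposition
  have rank1 : ∀ {x y : Bipath n m} (h : x ≤ y),
      Module.finrank k (LinearMap.range (V.map h)) = Nat.card {i : ι // x ∈ J i ∧ y ∈ J i} := by
    intro x y h
    rw [rank_eq_of_iso hiso h]
    exact finrank_range_dsum_interval J (fun i => (hJ i).2.1) h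
  -- ranks of V restricted to the upper path, computed via the chain decomposition
  have rank2 : ∀ {x y : UposetB n m} (h : x ≤ y),
      Module.finrank k (LinearMap.range ((V.comap (inclU n m)).map h))
        = Nat.card {i : ι' // x ∈ J' i ∧ y ∈ J' i} := by
    intro x y h
    rw [rank_eq_of_iso hiso' h]
    exact finrank_range_dsum_interval J' (fun i => (hJ' i).2.1) h
  -- the restricted module has literally the same structure maps
  have rank12 : ∀ {x y : UposetB n m} (h : x ≤ y),
      Module.finrank k (LinearMap.range ((V.comap (inclU n m)).map h))
        = Module.finrank k (LinearMap.range (V.map ((inclU n m).monotone h))) := fun _ => rfl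
  -- the two inclusion–exclusion identities
  have idB := count_identity J (fun i => (hJ i).2.1) hpaa hab hbpb
  have idU := count_identity J' (fun i => (hJ' i).2.1) hpaa' hab' hbpb'
  -- translate the chain-side counts into bipath-side counts
  have e1 : Nat.card {i : ι' // pa' ∈ J' i ∧ b' ∈ J' i}
      = Nat.card {i : ι // pa ∈ J i ∧ b ∈ J i} := by
    rw [← rank2 hpab', rank12 hpab', rank1 ((inclU n m).monotone hpab')]
    rfl
  have e2 : Nat.card {i : ι' // a' ∈ J' i ∧ pb' ∈ J' i}
      = Nat.card {i : ι // a ∈ J i ∧ pb ∈ J i} := by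
    rw [← rank2 hapb', rank12 hapb', rank1 ((inclU n m).monotone hapb')]
    rfl
  have e3 : Nat.card {i : ι' // a' ∈ J' i ∧ b' ∈ J' i}
      = Nat.card {i : ι // a ∈ J i ∧ b ∈ J i} := by
    rw [← rank2 hab', rank12 hab', rank1 ((inclU n m).monotone hab')]
    rfl
  have e4 : Nat.card {i : ι' // pa' ∈ J' i ∧ pb' ∈ J' i}
      = Nat.card {i : ι // pa ∈ J i ∧ pb ∈ J i} := by
    rw [← rank2 hpapb', rank12 hpapb', rank1 ((inclU n m).monotone hpapb')]
    rfl
  rw [e1, e2, e3, e4] at idU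
  have hmain : Nat.card {i : ι // a ∈ J i ∧ b ∈ J i ∧ pa ∉ J i ∧ pb ∉ J i}
      = Nat.card {i : ι' // a' ∈ J' i ∧ b' ∈ J' i ∧ pa' ∉ J' i ∧ pb' ∉ J' i} := by omega
  rw [show Nat.card {i : ι // J i =
        {x : Bipath n m | ∃ j : Fin n, x = Bipath.up j ∧ i1 ≤ j ∧ j ≤ i2}}
      = Nat.card {i : ι // a ∈ J i ∧ b ∈ J i ∧ pa ∉ J i ∧ pb ∉ J i} from
    Nat.card_congr (Equiv.subtypeEquivRight fun i => (charB i1 i2 h12 (J i) (hJ i)).symm)]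
  rw [show Nat.card {i : ι' // J' i =
        {x : UposetB n m | ∃ j : Fin n, x.val = Bipath.up j ∧ i1 ≤ j ∧ j ≤ i2}}
      = Nat.card {i : ι' // a' ∈ J' i ∧ b' ∈ J' i ∧ pa' ∉ J' i ∧ pb' ∉ J' i} from
    Nat.card_congr (Equiv.subtypeEquivRight fun i => (charU i1 i2 h12 (J' i) (hJ' i)).symm)]
  exact hmain
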